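/- arXiv:1111.1797 — 5 statements merged into one kernel-verified Lean document; each statement's English description precedes it below -/
import Mathlib

section
/- For all positive integers α and β and all y ∈ [0,1], the CDF of the Beta(α, β) distribution at y equals 1 minus the CDF of the Binomial(α+β−1, y) distribution at α−1; that is, F^{beta}_{α,β}(y) = 1 − F^{B}_{α+β−1, y}(α−1). -/
open MeasureTheory Real

/-- pmf of the Binomial(n,p) distribution. -/
noncomputable def binPMF (n : ℕ) (p : ℝ) (s : ℕ) : ℝ :=
  (n.choose s : ℝ) * p ^ s * (1 - p) ^ (n - s)

/-- CDF of the Binomial(n,p) distribution, evaluated at an integer argument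
(so that the convention `F(-1) = 0` makes sense). -/
noncomputable def binCDF (n : ℕ) (p : ℝ) (s : ℤ) : ℝ :=
  ∑ k ∈ Finset.range (s + 1).toNat, binPMF n p k

/-- pdf of the Beta(a,b) distribution (for positive integer parameters). -/
noncomputable def betaPDF (a b : ℕ) (x : ℝ) : ℝ :=
  if 0 < x ∧ x < 1 then
    (Real.Gamma (a + b) / (Real.Gamma a * Real.Gamma b)) * x ^ (a - 1) * (1 - x) ^ (b - 1)
  else 0

/-- CDF of the Beta(a,b) distribution. -/
noncomputable def betaCDF (a b : ℕ) (y : ℝ) : ℝ :=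
  ∫ x in Set.Iic y, betaPDF a b x

/-! Differentiating the binomial CDF in `p` telescopes (the Bernstein derivative formula):
`d/dp P(Bin(n+1, p) ≤ m) = -(n+1) · P(Bin(n, p) = m)`, and `(n+1) · P(Bin(n, p) = m)` is
the Beta(m+1, n-m+1) density. Integrating from `0`, where the binomial CDF is `1`, gives the
identity. -/

open Polynomial in
theorem Polynomial.derivative_sum_range_bernsteinPolynomial {R : Type*} [CommRing R] (n m : ℕ) :
    derivative (∑ k ∈ Finset.range (m + 1), bernsteinPolynomial R (n + 1) k) =
      -((n : R[X]) + 1) * bernsteinPolynomial R n m := by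
  induction m with
  | zero => simp [bernsteinPolynomial.derivative_zero]
  | succ m ih =>
    rw [Finset.sum_range_succ, derivative_add, ih, bernsteinPolynomial.derivative_succ]
    push_cast
    ring

theorem binPMF_eq_eval_bernsteinPolynomial (n : ℕ) (p : ℝ) (k : ℕ) :
    binPMF n p k = (bernsteinPolynomial ℝ n k).eval p := by
  simp [binPMF, bernsteinPolynomial]

theorem binCDF_natCast (n : ℕ) (p : ℝ) (m : ℕ) :
    binCDF n p m = ∑ k ∈ Finset.range (m + 1), binPMF n p k := by
  simp [binCDF, Int.toNat_natCast_add_one]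

theorem binCDF_zero (n m : ℕ) : binCDF n 0 m = 1 := by
  simp [binCDF_natCast, binPMF_eq_eval_bernsteinPolynomial, bernsteinPolynomial.eval_at_0]

theorem hasDerivAt_binCDF (n m : ℕ) (p : ℝ) :
    HasDerivAt (fun q => binCDF (n + 1) q m) (-(((n : ℝ) + 1) * binPMF n p m)) p := by
  have h := (∑ k ∈ Finset.range (m + 1), bernsteinPolynomial ℝ (n + 1) k).hasDerivAt p
  rw [Polynomial.derivative_sum_range_bernsteinPolynomial] at h
  simpa only [binCDF_natCast, binPMF_eq_eval_bernsteinPolynomial, Polynomial.eval_finsetSum,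
    Polynomial.eval_mul, Polynomial.eval_neg, Polynomial.eval_add, Polynomial.eval_natCast,
    Polynomial.eval_one, neg_mul] using h

theorem integral_binPMF (n m : ℕ) (y : ℝ) :
    ∫ x in (0 : ℝ)..y, ((n : ℝ) + 1) * binPMF n x m = 1 - binCDF (n + 1) y m := by
  have hderiv (x : ℝ) :
      HasDerivAt (fun q => -binCDF (n + 1) q m) (((n : ℝ) + 1) * binPMF n x m) x :=
    (hasDerivAt_binCDF n m x).neg.congr_deriv (neg_neg _)
  have hcont : Continuous fun x => ((n : ℝ) + 1) * binPMF n x m := by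
    unfold binPMF; fun_prop
  rw [intervalIntegral.integral_eq_sub_of_hasDerivAt (fun x _ => hderiv x)
    (hcont.intervalIntegrable 0 y), binCDF_zero]
  ring

theorem setIntegral_Iic_indicator_Ioo_zero_one (f : ℝ → ℝ) {y : ℝ}
    (hy : y ∈ Set.Icc (0 : ℝ) 1) :
    ∫ x in Set.Iic y, (Set.Ioo 0 1).indicator f x = ∫ x in (0 : ℝ)..y, f x := by
  rw [setIntegral_indicator measurableSet_Ioo, intervalIntegral.integral_of_le hy.1]
  rcases hy.2.lt_or_eq with hy1 | rfl
  · congr 2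
    ext x
    simp only [Set.mem_inter_iff, Set.mem_Iic, Set.mem_Ioo, Set.mem_Ioc]
    constructor
    · rintro ⟨hxy, hx0, -⟩
      exact ⟨hx0, hxy⟩
    · rintro ⟨hx0, hxy⟩
      exact ⟨hxy, hx0, hxy.trans_lt hy1⟩
  · rw [Set.inter_eq_right.2 fun x hx => hx.2.le, integral_Ioc_eq_integral_Ioo]

theorem Real.Gamma_add_div_Gamma_mul_Gamma_natCast_succ (m b : ℕ) :
    Gamma (((m + 1 : ℕ) : ℝ) + ((b + 1 : ℕ) : ℝ)) /
        (Gamma ((m + 1 : ℕ) : ℝ) * Gamma ((b + 1 : ℕ) : ℝ)) =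
      ((m + b : ℕ) + 1) * (m + b).choose m := by
  have hfact :
      (m + b + 1).factorial = (m + b + 1) * ((m + b).choose m * m.factorial * b.factorial) := by
    rw [Nat.factorial_succ, ← Nat.choose_mul_factorial_mul_factorial (Nat.le_add_right m b),
      Nat.add_sub_cancel_left]
  rw [show ((m + 1 : ℕ) : ℝ) + ((b + 1 : ℕ) : ℝ) = ((m + b + 1 : ℕ) : ℝ) + 1 by
      push_cast; ring,
    Nat.cast_succ m, Nat.cast_succ b, Real.Gamma_nat_eq_factorial, Real.Gamma_nat_eq_factorial,
    Real.Gamma_nat_eq_factorial, div_eq_iff (by positivity), hfact]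
  push_cast
  ring

theorem betaPDF_succ_succ (m b : ℕ) :
    betaPDF (m + 1) (b + 1) =
      (Set.Ioo 0 1).indicator fun x => ((m + b : ℕ) + 1) * binPMF (m + b) x m := by
  ext x
  simp only [betaPDF, Set.indicator, Set.mem_Ioo, Real.Gamma_add_div_Gamma_mul_Gamma_natCast_succ,
    binPMF, Nat.add_sub_cancel, Nat.add_sub_cancel_left]
  split_ifs <;> ring

/-- for positive integers α, β and y ∈ [0,1],
`F^beta_{α,β}(y) = 1 − F^B_{α+β−1, y}(α−1)`. -/
theorem beta_binomial_identity (α β : ℕ) (hα : 0 < α) (hβ : 0 < β)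
    (y : ℝ) (hy : y ∈ Set.Icc (0 : ℝ) 1) :
    betaCDF α β y = 1 - binCDF (α + β - 1) y ((α : ℤ) - 1) := by
  obtain ⟨m, rfl⟩ : ∃ m, α = m + 1 := ⟨α - 1, by omega⟩
  obtain ⟨b, rfl⟩ : ∃ b, β = b + 1 := ⟨β - 1, by omega⟩
  rw [betaCDF, betaPDF_succ_succ, setIntegral_Iic_indicator_Ioo_zero_one _ hy, integral_binPMF,
    show m + 1 + (b + 1) - 1 = m + b + 1 by omega,
    show ((m + 1 : ℕ) : ℤ) - 1 = m by push_cast; ring]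
end

section
/- Let 0 < y < μ₁ ≤ 1 and let j be a nonnegative integer. Then ∑_{s=0}^{⌊yj⌋} f^{B}_{j,μ₁}(s) / F^{B}_{j+1,y}(s) ≤ (μ₁ / (μ₁ − y)) · e^{−Dj}, where D = y ln(y/μ₁) + (1−y) ln((1−y)/(1−μ₁)) is the KL divergence between Bernoulli(y) and Bernoulli(μ₁). -/
open MeasureTheory Real

lemma binPMF_nonneg (n : ℕ) {p : ℝ} (h0 : 0 ≤ p) (h1 : p ≤ 1) (s : ℕ) :
    0 ≤ binPMF n p s := by
  have : 0 ≤ 1 - p := by linarith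
  unfold binPMF; positivity

lemma binPMF_pos (n : ℕ) {p : ℝ} (h0 : 0 < p) (h1 : p < 1) {s : ℕ} (hs : s ≤ n) :
    0 < binPMF n p s := by
  have h1p : 0 < 1 - p := by linarith
  have hc : 0 < (n.choose s : ℝ) := by exact_mod_cast Nat.choose_pos hs
  unfold binPMF; positivity

lemma binCDF_ge (n : ℕ) {p : ℝ} (h0 : 0 ≤ p) (h1 : p ≤ 1) (s : ℕ) :
    binPMF n p s ≤ binCDF n p (s : ℤ) := by
  have ht : ((s : ℤ) + 1).toNat = s + 1 := by omega
  rw [binCDF, ht]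
  exact Finset.single_le_sum (fun k _ => binPMF_nonneg n h0 h1 k)
    (Finset.self_mem_range_succ s)

lemma binPMF_succ_ge (n : ℕ) {p : ℝ} (h0 : 0 ≤ p) (h1 : p ≤ 1) {s : ℕ} (hs : s ≤ n) :
    (1 - p) * binPMF n p s ≤ binPMF (n + 1) p s := by
  have h1p : 0 ≤ 1 - p := by linarith
  have hc : (n.choose s : ℝ) ≤ ((n + 1).choose s : ℝ) := by
    exact_mod_cast Nat.choose_le_choose s (Nat.le_succ n)
  have he : n + 1 - s = (n - s) + 1 := by omega
  unfold binPMF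
  rw [he, pow_succ]
  have h2 : 0 ≤ p ^ s * ((1 - p) ^ (n - s) * (1 - p)) := by positivity
  calc (1 - p) * ((n.choose s : ℝ) * p ^ s * (1 - p) ^ (n - s))
      = (n.choose s : ℝ) * (p ^ s * ((1 - p) ^ (n - s) * (1 - p))) := by ring
    _ ≤ ((n + 1).choose s : ℝ) * (p ^ s * ((1 - p) ^ (n - s) * (1 - p))) :=
        mul_le_mul_of_nonneg_right hc h2
    _ = ((n + 1).choose s : ℝ) * p ^ s * ((1 - p) ^ (n - s) * (1 - p)) := by ring

lemma ratio_eq {y μ₁ : ℝ} (hy : y ≠ 0) (hy1 : (1:ℝ) - y ≠ 0) (hμ1 : (1:ℝ) - μ₁ ≠ 0)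
    {s j : ℕ} (hs : s ≤ j) :
    binPMF j μ₁ s = ((1 - μ₁) / (1 - y)) ^ j * ((μ₁ * (1 - y)) / (y * (1 - μ₁))) ^ s
      * binPMF j y s := by
  obtain ⟨t, rfl⟩ := Nat.exists_eq_add_of_le hs
  simp only [binPMF, Nat.add_sub_cancel_left]
  rw [div_pow, div_pow, mul_pow, mul_pow, pow_add, pow_add]
  field_simp

/-- for `0 < y < μ₁ ≤ 1` and any `j : ℕ`,
`∑_{s=0}^{⌊yj⌋} f^B_{j,μ₁}(s) / F^B_{j+1,y}(s) ≤ (μ₁/(μ₁−y)) e^{−Dj}` where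
`D = y ln(y/μ₁) + (1−y) ln((1−y)/(1−μ₁))` is the KL divergence between
`Bernoulli(y)` and `Bernoulli(μ₁)`. -/
theorem small_s_likelihood_ratio_bound (y μ₁ : ℝ) (hy : 0 < y) (hyμ : y < μ₁)
    (hμ : μ₁ ≤ 1) (j : ℕ)
    (D : ℝ) (hD : D = y * Real.log (y / μ₁) + (1 - y) * Real.log ((1 - y) / (1 - μ₁))) :
    ∑ s ∈ Finset.range (⌊y * j⌋₊ + 1), binPMF j μ₁ s / binCDF (j + 1) y (s : ℤ) ≤
      (μ₁ / (μ₁ - y)) * Real.exp (-D * j) := by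
  have hy1 : y < 1 := lt_of_lt_of_le hyμ hμ
  have h1y : (0:ℝ) < 1 - y := by linarith
  have hμy : (0:ℝ) < μ₁ - y := by linarith
  have hμ0 : (0:ℝ) < μ₁ := lt_trans hy hyμ
  rcases eq_or_lt_of_le hμ with h1 | h1
  · -- μ₁ = 1
    subst h1
    have hDval : D = y * Real.log y := by
      rw [hD]; simp
    rcases Nat.eq_zero_or_pos j with hj | hj
    · subst hj
      have hs : (⌊y * ((0:ℕ):ℝ)⌋₊ + 1) = 1 := by norm_num
      rw [hs, Finset.range_one, Finset.sum_singleton]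
      have hcdf : binCDF (0 + 1) y ((0:ℕ) : ℤ) = 1 - y := by
        norm_num [binCDF, binPMF]
      have hpmf : binPMF 0 1 0 = 1 := by norm_num [binPMF]
      rw [hcdf, hpmf]
      norm_num [Real.exp_zero]
    · have hterm : ∀ s ∈ Finset.range (⌊y * j⌋₊ + 1),
          binPMF j 1 s / binCDF (j + 1) y (s : ℤ) = 0 := by
        intro s hs
        have hsm : s ≤ ⌊y * j⌋₊ := Nat.lt_succ_iff.mp (Finset.mem_range.mp hs)
        have hjlt : ⌊y * j⌋₊ < j := by
          rw [Nat.floor_lt (by positivity)]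
          have : (0:ℝ) < j := by exact_mod_cast hj
          nlinarith
        have hsj : s < j := lt_of_le_of_lt hsm hjlt
        have : binPMF j 1 s = 0 := by
          unfold binPMF
          have : (1:ℝ) - 1 = 0 := by ring
          rw [this, zero_pow (by omega)]
          ring
        rw [this, zero_div]
      rw [Finset.sum_congr rfl hterm]
      simp only [Finset.sum_const_zero]
      positivity
  · -- μ₁ < 1
    have h1μ : (0:ℝ) < 1 - μ₁ := by linarith
    set m := ⌊y * (j:ℝ)⌋₊ with hmdef
    set A := (1 - μ₁) / (1 - y) with hAdef
    set R := (μ₁ * (1 - y)) / (y * (1 - μ₁)) with hRdef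
    have hApos : 0 < A := by positivity
    have hRpos : 0 < R := by positivity
    have hR : 1 < R := by
      rw [hRdef, lt_div_iff₀ (by positivity)]
      nlinarith
    have hRm1 : 0 < R - 1 := by linarith
    have hm_le : (m : ℝ) ≤ y * j := Nat.floor_le (by positivity)
    have hmj : m ≤ j := by
      have h1 : y * (j:ℝ) ≤ (j:ℝ) := by nlinarith [Nat.cast_nonneg (α := ℝ) j]
      calc m ≤ ⌊(j:ℝ)⌋₊ := Nat.floor_le_floor h1
        _ = j := Nat.floor_natCast j
    -- pointwise bound
    have hpoint : ∀ s ∈ Finset.range (m + 1),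
        binPMF j μ₁ s / binCDF (j + 1) y (s : ℤ) ≤ A ^ j * R ^ s / (1 - y) := by
      intro s hs
      have hsj : s ≤ j := le_trans (Nat.lt_succ_iff.mp (Finset.mem_range.mp hs)) hmj
      have hPpos : 0 < binPMF j y s := binPMF_pos j hy hy1 hsj
      have hden : (1 - y) * binPMF j y s ≤ binCDF (j + 1) y (s : ℤ) :=
        le_trans (binPMF_succ_ge j hy.le hy1.le hsj) (binCDF_ge (j + 1) hy.le hy1.le s)
      have hdpos : 0 < (1 - y) * binPMF j y s := by positivity
      have hnum : 0 ≤ binPMF j μ₁ s := binPMF_nonneg j hμ0.le hμ s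
      have h1' : binPMF j μ₁ s / binCDF (j + 1) y (s : ℤ)
          ≤ binPMF j μ₁ s / ((1 - y) * binPMF j y s) :=
        div_le_div_of_nonneg_left hnum hdpos hden
      refine le_trans h1' (le_of_eq ?_)
      rw [ratio_eq hy.ne' h1y.ne' h1μ.ne' hsj, ← hAdef, ← hRdef]
      rw [mul_comm (1 - y) (binPMF j y s), ← div_div, mul_div_assoc,
        div_self hPpos.ne', mul_one]
    calc ∑ s ∈ Finset.range (m + 1), binPMF j μ₁ s / binCDF (j + 1) y (s : ℤ)
        ≤ ∑ s ∈ Finset.range (m + 1), A ^ j * R ^ s / (1 - y) :=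
          Finset.sum_le_sum hpoint
      _ = A ^ j / (1 - y) * ∑ s ∈ Finset.range (m + 1), R ^ s := by
          rw [Finset.mul_sum]
          exact Finset.sum_congr rfl fun s _ => by ring
      _ = A ^ j / (1 - y) * ((R ^ (m + 1) - 1) / (R - 1)) := by
          rw [geom_sum_eq hR.ne' (m + 1)]
      _ ≤ A ^ j / (1 - y) * (R ^ (m + 1) / (R - 1)) := by
          have hgeom : (R ^ (m + 1) - 1) / (R - 1) ≤ R ^ (m + 1) / (R - 1) :=
            by gcongr; linarith
          exact mul_le_mul_of_nonneg_left hgeom (by positivity)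
      _ = μ₁ / (μ₁ - y) * (A ^ j * R ^ m) := by
          have hRR : R / (R - 1) = μ₁ * (1 - y) / (μ₁ - y) := by
            rw [div_eq_div_iff hRm1.ne' hμy.ne', hRdef]
            field_simp
            ring
          calc A ^ j / (1 - y) * (R ^ (m + 1) / (R - 1))
              = A ^ j * R ^ m * (R / (R - 1)) / (1 - y) := by rw [pow_succ]; ring
            _ = A ^ j * R ^ m * (μ₁ * (1 - y) / (μ₁ - y)) / (1 - y) := by rw [hRR]
            _ = μ₁ / (μ₁ - y) * (A ^ j * R ^ m) := by
                field_simp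
      _ ≤ μ₁ / (μ₁ - y) * Real.exp (-D * j) := by
          apply mul_le_mul_of_nonneg_left _ (by positivity)
          have hlogR : 0 ≤ Real.log R := Real.log_nonneg hR.le
          have hA_eq : A ^ j = Real.exp (Real.log A * j) := by
            rw [mul_comm, Real.exp_nat_mul, Real.exp_log hApos]
          have hR_eq : R ^ m = Real.exp (Real.log R * m) := by
            rw [mul_comm, Real.exp_nat_mul, Real.exp_log hRpos]
          rw [hA_eq, hR_eq, ← Real.exp_add]
          apply Real.exp_le_exp.mpr
          have hmono : Real.log R * m ≤ Real.log R * (y * j) :=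
            mul_le_mul_of_nonneg_left hm_le hlogR
          have hiden : Real.log A * j + Real.log R * (y * j) = -D * j := by
            rw [hD, hAdef, hRdef, Real.log_div h1μ.ne' h1y.ne',
              Real.log_div (by positivity : (μ₁ * (1 - y)) ≠ 0) (by positivity : (y * (1 - μ₁)) ≠ 0),
              Real.log_mul hμ0.ne' h1y.ne', Real.log_mul hy.ne' h1μ.ne',
              Real.log_div hy.ne' hμ0.ne', Real.log_div h1y.ne' h1μ.ne']
            ring
          linarith
end

section
/- Let 0 < y < μ₁ < 1, R = μ₁(1−y)/(y(1−μ₁)), and D = y ln(y/μ₁) + (1−y) ln((1−y)/(1−μ₁)). Then for any nonnegative integers j and s with s ≤ yj + y, the likelihood ratio bound f^{B}_{j,μ₁}(s) / ((1−y) f^{B}_{j,y}(s)) ≤ (R^y / (1−y)) · e^{−Dj} holds. -/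
open MeasureTheory Real

/-- for `0 < y < μ₁ < 1`, `R = μ₁(1−y)/(y(1−μ₁))`,
`D = y ln(y/μ₁) + (1−y) ln((1−y)/(1−μ₁))`, and nonnegative integers `j, s` with
`s ≤ yj + y`, we have `f^B_{j,μ₁}(s) / ((1−y) f^B_{j,y}(s)) ≤ (R^y/(1−y)) e^{−Dj}`. -/
theorem likelihood_ratio_bound (y μ₁ : ℝ) (hy : 0 < y) (hyμ : y < μ₁) (hμ : μ₁ < 1)
    (R D : ℝ) (hR : R = μ₁ * (1 - y) / (y * (1 - μ₁)))
    (hD : D = y * Real.log (y / μ₁) + (1 - y) * Real.log ((1 - y) / (1 - μ₁)))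
    (j s : ℕ) (hs : (s : ℝ) ≤ y * j + y) :
    binPMF j μ₁ s / ((1 - y) * binPMF j y s) ≤ (R ^ y / (1 - y)) * Real.exp (-D * j) := by
  have hy1 : (0:ℝ) < 1 - y := by linarith
  have hμ0 : (0:ℝ) < μ₁ := lt_trans hy hyμ
  have hμ1 : (0:ℝ) < 1 - μ₁ := by linarith
  have hR0 : 0 < R := by rw [hR]; positivity
  have hR1 : 1 ≤ R := by
    rw [hR, le_div_iff₀ (by positivity)]
    nlinarith
  have hRy : (0:ℝ) < R ^ y := Real.rpow_pos_of_pos hR0 y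
  set a : ℝ := (1 - μ₁) / (1 - y) with ha
  have ha0 : 0 < a := by positivity
  by_cases hsj : s ≤ j
  · -- main case
    have hC : (0:ℝ) < (j.choose s : ℝ) := by exact_mod_cast Nat.choose_pos hsj
    have hBy : 0 < binPMF j y s := by
      unfold binPMF; positivity
    -- the ratio identity
    have hratio : binPMF j μ₁ s = binPMF j y s * (R ^ s * a ^ j) := by
      have hRa : R * a = μ₁ / y := by
        rw [hR, ha]; field_simp
      have h1 : (R * a) ^ s = R ^ s * a ^ s := mul_pow _ _ _
      have h2 : a ^ s * a ^ (j - s) = a ^ j := by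
        rw [← pow_add, Nat.add_sub_cancel' hsj]
      have hμy : μ₁ ^ s = y ^ s * (R ^ s * a ^ s) := by
        rw [← h1, hRa, div_pow]
        field_simp
      have hab : (1 - μ₁) ^ (j - s) = (1 - y) ^ (j - s) * a ^ (j - s) := by
        rw [ha, div_pow]; field_simp
      unfold binPMF
      rw [hμy, hab]
      calc (j.choose s : ℝ) * (y ^ s * (R ^ s * a ^ s)) * ((1 - y) ^ (j - s) * a ^ (j - s))
          = (j.choose s : ℝ) * y ^ s * (1 - y) ^ (j - s) * (R ^ s * (a ^ s * a ^ (j - s))) := by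
            ring
        _ = _ := by rw [h2]
    -- bound R^s ≤ R^(y*j+y)
    have hRs : (R:ℝ) ^ s ≤ R ^ (y * j + y) := by
      rw [← Real.rpow_natCast R s]
      exact Real.rpow_le_rpow_of_exponent_le hR1 hs
    -- key identity : R^(y*j+y) * a^j = R^y * exp(-D*j)
    have hlogR : Real.log R = Real.log μ₁ + Real.log (1 - y) - Real.log y - Real.log (1 - μ₁) := by
      rw [hR, Real.log_div (by positivity) (by positivity),
        Real.log_mul (ne_of_gt hμ0) (ne_of_gt hy1),
        Real.log_mul (ne_of_gt hy) (ne_of_gt hμ1)]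
      ring
    have hloga : Real.log a = Real.log (1 - μ₁) - Real.log (1 - y) :=
      Real.log_div (ne_of_gt hμ1) (ne_of_gt hy1)
    have hD' : y * Real.log R + Real.log a = -D := by
      rw [hD, hlogR, hloga, Real.log_div (ne_of_gt hy) (ne_of_gt hμ0),
        Real.log_div (ne_of_gt hy1) (ne_of_gt hμ1)]
      ring
    have hexp : R ^ y * a = Real.exp (-D) := by
      rw [← hD', Real.exp_add, Real.rpow_def_of_pos hR0, Real.exp_log ha0, mul_comm y]
    have hkey : R ^ (y * j + y) * a ^ j = R ^ y * Real.exp (-D * j) := by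
      have : R ^ (y * (j:ℝ) + y) = (R ^ y) ^ j * R ^ y := by
        rw [Real.rpow_add hR0, Real.rpow_mul (le_of_lt hR0), Real.rpow_natCast]
      rw [this]
      have : (R ^ y) ^ j * R ^ y * a ^ j = R ^ y * ((R ^ y * a) ^ j) := by
        rw [mul_pow]; ring
      rw [this, hexp, ← Real.exp_nat_mul]
      ring_nf
    -- combine
    have hmain : binPMF j μ₁ s / binPMF j y s ≤ R ^ y * Real.exp (-D * j) := by
      rw [hratio, ← hkey, mul_comm (binPMF j y s), mul_div_assoc, div_self (ne_of_gt hBy),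
        mul_one]
      have haj : (0:ℝ) ≤ a ^ j := le_of_lt (pow_pos ha0 j)
      exact mul_le_mul_of_nonneg_right hRs haj
    calc binPMF j μ₁ s / ((1 - y) * binPMF j y s)
        = (binPMF j μ₁ s / binPMF j y s) / (1 - y) := by
          rw [div_div]; ring_nf
      _ ≤ (R ^ y * Real.exp (-D * j)) / (1 - y) := by
          gcongr
      _ = (R ^ y / (1 - y)) * Real.exp (-D * j) := by ring
  · have hc : j.choose s = 0 := Nat.choose_eq_zero_of_lt (lt_of_not_ge hsj)
    have : binPMF j μ₁ s = 0 := by unfold binPMF; rw [hc]; simp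
    rw [this, zero_div]
    positivity
end

section
/- For 0 < y < μ₁ < 1, let R = μ₁(1−y)/(y(1−μ₁)), D = y ln(y/μ₁) + (1−y) ln((1−y)/(1−μ₁)), and Δ' = μ₁ − y. Then y ln R ≤ (D + 1)/Δ'. -/
open Real

/-- for `0 < y < μ₁ < 1`, with `R = μ₁(1−y)/(y(1−μ₁))`,
`D = y ln(y/μ₁) + (1−y) ln((1−y)/(1−μ₁))` and `Δ' = μ₁ − y`, one has
`y ln R ≤ (D + 1)/Δ'`. -/
theorem y_log_R_bound (y μ₁ : ℝ) (hy : 0 < y) (hyμ : y < μ₁) (hμ : μ₁ < 1)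
    (R D Δ' : ℝ) (hR : R = μ₁ * (1 - y) / (y * (1 - μ₁)))
    (hD : D = y * Real.log (y / μ₁) + (1 - y) * Real.log ((1 - y) / (1 - μ₁)))
    (hΔ : Δ' = μ₁ - y) :
    y * Real.log R ≤ (D + 1) / Δ' := by
  have hy1 : y < 1 := hyμ.trans hμ
  have hμ0 : 0 < μ₁ := hy.trans hyμ
  have h1μ : 0 < 1 - μ₁ := by linarith
  have h1y : 0 < 1 - y := by linarith
  have hΔ0 : 0 < Δ' := by rw [hΔ]; linarith
  set L := Real.log ((1 - y) / (1 - μ₁)) with hL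
  have hL0 : 0 ≤ L := Real.log_nonneg (by rw [le_div_iff₀ h1μ]; linarith)
  have hlogR : Real.log R = Real.log (μ₁ / y) + L := by
    rw [hR, hL,
      show μ₁ * (1 - y) / (y * (1 - μ₁)) = (μ₁ / y) * ((1 - y) / (1 - μ₁)) by
        field_simp,
      Real.log_mul (by positivity) (by positivity)]
  have hlogy : Real.log (y / μ₁) = - Real.log (μ₁ / y) := by
    rw [← Real.log_inv, inv_div]
  set A := y * Real.log (μ₁ / y) with hA
  have he : (2:ℝ) ≤ Real.exp 1 := by
    have := Real.add_one_le_exp 1; linarith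
  have hlog_le : Real.log (μ₁ / y) ≤ (μ₁ / y) / Real.exp 1 := by
    have h := Real.log_le_sub_one_of_pos (show 0 < (μ₁ / y) / Real.exp 1 by positivity)
    rw [Real.log_div (by positivity) (Real.exp_ne_zero 1), Real.log_exp] at h
    linarith
  have hAle : A ≤ μ₁ / Real.exp 1 := by
    rw [hA]
    calc y * Real.log (μ₁ / y) ≤ y * ((μ₁ / y) / Real.exp 1) :=
          mul_le_mul_of_nonneg_left hlog_le hy.le
      _ = μ₁ / Real.exp 1 := by field_simp
  have hΔ1 : Δ' < 1 := by rw [hΔ]; linarith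
  have hA1 : A * Δ' + A ≤ 1 := by
    have h0A : 0 ≤ A := mul_nonneg hy.le (Real.log_nonneg (by rw [le_div_iff₀ hy]; linarith))
    have h1 : A * (Δ' + 1) ≤ (μ₁ / Real.exp 1) * (Δ' + 1) :=
      mul_le_mul_of_nonneg_right hAle (by linarith)
    have h2 : (μ₁ / Real.exp 1) * (Δ' + 1) ≤ (1 / 2) * 2 := by
      apply mul_le_mul
      · rw [div_le_div_iff₀ (by positivity) two_pos]; nlinarith
      · linarith
      · linarith
      · norm_num
    nlinarith
  have hyL : Δ' * (y * L) ≤ (1 - y) * L := by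
    have h1 : Δ' * y ≤ 1 - y := by nlinarith
    calc Δ' * (y * L) = (Δ' * y) * L := by ring
      _ ≤ (1 - y) * L := mul_le_mul_of_nonneg_right h1 hL0
  rw [hD, hlogR, hlogy, le_div_iff₀ hΔ0]
  nlinarith [hA1, hyL]
end

section
/- Consider Thompson Sampling for the two-armed Bernoulli bandit with means μ₁ > μ₂, Δ = μ₁ − μ₂, run for T steps with L = 24(ln T)/Δ². For each t, let E₂(t) be the event that θ₂(t) ≤ μ₂ + Δ/2 or k₂(t) < L, where θ₂(t) ~ Beta(S₂(t)+1, F₂(t)+1) is the sample for arm 2 at time t and k₂(t) is the number of plays of arm 2 before time t. Then for all t, Pr(E₂(t)) ≥ 1 − 2/T². -/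
open MeasureTheory ProbabilityTheory Real

/-- A run of Thompson Sampling on an `N`-armed Bernoulli bandit with means `μ`,
over a probability space `(Ω, P)`.  Time steps are `t = 1, 2, …`; at each step the
algorithm samples `θ t i` for every arm `i` (distributed, given the history of plays
and rewards, independently as `Beta(Sᵢ+1, Fᵢ+1)` where `Sᵢ, Fᵢ` count the successes
and failures of arm `i` so far), plays the arm `play t` with the largest sample, and
receives a Bernoulli(`μ i`) reward `r t`. -/
structure TSModel (N : ℕ) (μ : Fin N → ℝ) {Ω : Type*} [MeasurableSpace Ω]
    (P : Measure Ω) where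
  /-- the Beta samples at each time step -/
  θ : ℕ → Fin N → Ω → ℝ
  /-- the arm played at each time step -/
  play : ℕ → Ω → Fin N
  /-- the (Bernoulli) reward received at each time step -/
  r : ℕ → Ω → Bool
  meas_θ : ∀ t i, Measurable (θ t i)
  meas_play : ∀ t, Measurable (play t)
  meas_r : ∀ t, Measurable (r t)
  /-- the played arm has the largest sampled value -/
  argmax : ∀ t ω i, θ t i ω ≤ θ t (play t ω) ω
  /-- conditionally on the history `h` of (arm, reward) pairs at times `1,…,t−1`,
  the samples `θ t i` are independent across arms, with `θ t i` distributed as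
  `Beta(Sᵢ(h)+1, Fᵢ(h)+1)`. -/
  beta_sample : ∀ (t : ℕ) (h : Fin (t - 1) → Fin N × Bool) (x : Fin N → ℝ),
    P ({ω | ∀ i, θ t i ω ≤ x i} ∩
        {ω | ∀ τ : Fin (t - 1), (play ((τ : ℕ) + 1) ω, r ((τ : ℕ) + 1) ω) = h τ}) =
      ENNReal.ofReal (∏ i,
        betaCDF ((Finset.univ.filter fun τ : Fin (t - 1) => h τ = (i, true)).card + 1)
                ((Finset.univ.filter fun τ : Fin (t - 1) => h τ = (i, false)).card + 1)
                (x i)) *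
      P {ω | ∀ τ : Fin (t - 1), (play ((τ : ℕ) + 1) ω, r ((τ : ℕ) + 1) ω) = h τ}
  /-- conditionally on the history, the samples, and the arm `i` played at time `t`,
  the reward at time `t` is Bernoulli(`μ i`). -/
  reward : ∀ (t : ℕ) (i : Fin N) (h : Fin (t - 1) → Fin N × Bool)
      (B : Set (Fin N → ℝ)), MeasurableSet B →
    P ({ω | r t ω = true} ∩ {ω | (fun i => θ t i ω) ∈ B} ∩
        {ω | ∀ τ : Fin (t - 1), (play ((τ : ℕ) + 1) ω, r ((τ : ℕ) + 1) ω) = h τ} ∩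
        {ω | play t ω = i}) =
      ENNReal.ofReal (μ i) *
      P ({ω | (fun i => θ t i ω) ∈ B} ∩
          {ω | ∀ τ : Fin (t - 1), (play ((τ : ℕ) + 1) ω, r ((τ : ℕ) + 1) ω) = h τ} ∩
          {ω | play t ω = i})

namespace TSModel

variable {N : ℕ} [NeZero N] {μ : Fin N → ℝ} {Ω : Type*} [MeasurableSpace Ω] {P : Measure Ω}

/-- `k i t`: the number of plays of arm `i` at times `1, …, t−1`. -/
def k (M : TSModel N μ P) (i : Fin N) (t : ℕ) (ω : Ω) : ℕ :=
  ((Finset.Ico 1 t).filter fun τ => M.play τ ω = i).card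

/-- `S i t`: the number of successes of arm `i` at times `1, …, t−1`. -/
def S (M : TSModel N μ P) (i : Fin N) (t : ℕ) (ω : Ω) : ℕ :=
  ((Finset.Ico 1 t).filter fun τ => M.play τ ω = i ∧ M.r τ ω = true).card

/-- `sj j`: the number of successes in the first `j` plays of the (optimal) arm `0`. -/
noncomputable def sj (M : TSModel N μ P) (j : ℕ) (ω : Ω) : ℕ :=
  Set.ncard {τ | 1 ≤ τ ∧ M.play τ ω = 0 ∧ M.r τ ω = true ∧ M.k 0 τ ω < j}

/-- `tfun j`: the time step at which the `j`-th play of arm `0` happens (`tfun 0 = 0`). -/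
noncomputable def tfun (M : TSModel N μ P) : ℕ → Ω → ℕ
  | 0, _ => 0
  | (j + 1), ω => sInf {t | 1 ≤ t ∧ M.play t ω = 0 ∧ M.k 0 t ω = j}

end TSModel

/-!
Fix a history `h` of the first `t - 1` plays in which arm `i` was played `K ≥ L` times with
`S` successes. Given `h`, the sample `θ t i` is `Beta(S + 1, K - S + 1)`, and the beta–binomial
identity turns `P(θ t i > c)` into the binomial lower tail `P(Bin(K + 1, c) ≤ S)`. With
`c = μ i + 2ε`, if the empirical mean `S / K` is at most `μ i + ε` the Chernoff–Hoeffding bound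
makes this at most `exp (-2ε²L)`. Otherwise the history itself is unlikely: the exponential tilt
`exp (4εS) / (1 - μ i + μ i e^{4ε})^K` of arm `i`'s rewards has expectation at most `1` (it is a
supermartingale along the history), yet exceeds `exp (2ε²L)` on such histories. Summing over all
histories bounds `P(θ t i > c ∧ k i t ≥ L)` by `2 exp (-2ε²L)`, which is `2 / T³` for `ε = Δ / 4`
and `L = 24 ln T / Δ²`.
-/

open Finset

lemma one_sub_add_mul_exp_le {p : ℝ} (hp0 : 0 ≤ p) (hp1 : p ≤ 1) (x : ℝ) :
    1 - p + p * exp x ≤ exp (p * x + x ^ 2 / 8) := by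
  set ν : Measure ℝ :=
    ENNReal.ofReal (1 - p) • Measure.dirac 0 + ENNReal.ofReal p • Measure.dirac 1
  have : IsProbabilityMeasure ν := ⟨by
    simp [ν, ← ENNReal.ofReal_add (sub_nonneg.2 hp1) hp0]⟩
  have hmem : ∀ᵐ ω ∂ν, ω ∈ Set.Icc (0 : ℝ) 1 :=
    ae_add_measure_iff.2 ⟨Measure.ae_smul_measure (by simp) _, Measure.ae_smul_measure (by simp) _⟩
  have hint : ∀ g : ℝ → ℝ, ∫ ω, g ω ∂ν = (1 - p) * g 0 + p * g 1 := by
    intro g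
    rw [integral_add_measure ((integrable_dirac enorm_lt_top).smul_measure ENNReal.ofReal_ne_top)
      ((integrable_dirac enorm_lt_top).smul_measure ENNReal.ofReal_ne_top)]
    simp [integral_smul_measure, ENNReal.toReal_ofReal (sub_nonneg.2 hp1),
      ENNReal.toReal_ofReal hp0]
  have hX := (hasSubgaussianMGF_of_mem_Icc (X := id) aemeasurable_id hmem).mgf_le x
  simp only [mgf, id, hint] at hX
  have hc : ((‖(1 : ℝ) - 0‖₊ / 2) ^ 2 : NNReal) = (1 / 4 : ℝ) := by norm_num
  rw [hc, show x * (0 - ((1 - p) * 0 + p * 1)) = -(p * x) by ring,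
    show x * (1 - ((1 - p) * 0 + p * 1)) = x - p * x by ring, exp_neg, exp_sub] at hX
  calc 1 - p + p * exp x
      = exp (p * x) * ((1 - p) * (exp (p * x))⁻¹ + p * (exp x / exp (p * x))) := by field_simp
    _ ≤ exp (p * x) * exp (1 / 4 * x ^ 2 / 2) := by gcongr
    _ = exp (p * x + x ^ 2 / 8) := by rw [← exp_add]; ring_nf

lemma binPMF_nonneg_s11 {n : ℕ} {p : ℝ} (hp0 : 0 ≤ p) (hp1 : p ≤ 1) (j : ℕ) :
    0 ≤ binPMF n p j := by
  have : 0 ≤ 1 - p := sub_nonneg.2 hp1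
  unfold binPMF
  positivity

lemma sum_binPMF_mul_pow (n : ℕ) (p r : ℝ) :
    ∑ j ∈ range (n + 1), binPMF n p j * r ^ j = (p * r + (1 - p)) ^ n := by
  rw [add_pow]
  refine sum_congr rfl fun j _ => ?_
  rw [binPMF, mul_pow]
  ring

lemma sum_range_binPMF_le_exp {n s : ℕ} {p ε : ℝ} (hp0 : 0 ≤ p) (hp1 : p ≤ 1) (hε : 0 ≤ ε)
    (hs : (s : ℝ) ≤ (p - ε) * n) :
    ∑ j ∈ range (s + 1), binPMF n p j ≤ exp (-(2 * ε ^ 2 * n)) := by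
  have hsn : s ≤ n := by
    have : (s : ℝ) ≤ n := hs.trans (by nlinarith [(n.cast_nonneg : (0 : ℝ) ≤ n)])
    exact_mod_cast this
  calc ∑ j ∈ range (s + 1), binPMF n p j
      ≤ ∑ j ∈ range (s + 1), binPMF n p j * exp (4 * ε * (s - j)) := by
        refine sum_le_sum fun j hj => le_mul_of_one_le_right (binPMF_nonneg_s11 hp0 hp1 j)
          (one_le_exp (mul_nonneg (by positivity) (sub_nonneg.2 ?_)))
        exact_mod_cast Nat.lt_succ_iff.1 (mem_range.1 hj)
    _ ≤ ∑ j ∈ range (n + 1), binPMF n p j * exp (4 * ε * (s - j)) :=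
        sum_le_sum_of_subset_of_nonneg (range_subset_range.2 (by omega)) fun j _ _ =>
          mul_nonneg (binPMF_nonneg_s11 hp0 hp1 j) (exp_pos _).le
    _ = exp (4 * ε * s) * (p * exp (-(4 * ε)) + (1 - p)) ^ n := by
        rw [← sum_binPMF_mul_pow, mul_sum]
        refine sum_congr rfl fun j _ => ?_
        rw [← exp_nat_mul, mul_left_comm, ← exp_add]
        ring_nf
    _ ≤ exp (4 * ε * s) * exp (p * (-(4 * ε)) + (-(4 * ε)) ^ 2 / 8) ^ n := by
        gcongr
        linarith [one_sub_add_mul_exp_le hp0 hp1 (-(4 * ε))]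
    _ ≤ exp (-(2 * ε ^ 2 * n)) := by
        rw [← exp_nat_mul, ← exp_add, exp_le_exp]
        nlinarith [mul_le_mul_of_nonneg_left hs (by positivity : (0 : ℝ) ≤ 4 * ε)]

lemma hasDerivAt_binPMF (n j : ℕ) (y : ℝ) :
    HasDerivAt (fun y => binPMF n y j)
      (n.choose j * j * y ^ (j - 1) * (1 - y) ^ (n - j)
        - n.choose (j + 1) * (j + 1 : ℕ) * y ^ j * (1 - y) ^ (n - (j + 1))) y := by
  have hpow : HasDerivAt (fun y : ℝ => (1 - y) ^ (n - j))
      ((n - j : ℕ) * (1 - y) ^ (n - j - 1) * (0 - 1)) y :=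
    (hasDerivAt_pow _ (1 - y)).comp y ((hasDerivAt_const y 1).sub (hasDerivAt_id y))
  have hchoose : (n.choose (j + 1) * (j + 1 : ℕ) : ℝ) = n.choose j * (n - j : ℕ) := by
    exact_mod_cast Nat.choose_succ_right_eq n j
  refine (((hasDerivAt_pow j y).const_mul (n.choose j : ℝ)).mul hpow).congr_deriv ?_
  rw [hchoose, Nat.sub_add_eq]
  ring

lemma hasDerivAt_sum_range_binPMF (n s : ℕ) (y : ℝ) :
    HasDerivAt (fun y => ∑ j ∈ range (s + 1), binPMF n y j)
      (-(n.choose (s + 1) * (s + 1 : ℕ) * y ^ s * (1 - y) ^ (n - (s + 1)))) y := by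
  refine (HasDerivAt.fun_sum fun j (_ : j ∈ range (s + 1)) =>
    hasDerivAt_binPMF n j y).congr_deriv ?_
  simpa using sum_range_sub'
    (fun j : ℕ => (n.choose j * j * y ^ (j - 1) * (1 - y) ^ (n - j) : ℝ)) (s + 1)

lemma betaPDF_succ_succ_s11 (s f : ℕ) :
    _root_.betaPDF (s + 1) (f + 1) = (Set.Ioo 0 1).indicator
      fun x : ℝ => (s + f + 1).choose (s + 1) * (s + 1 : ℕ) * x ^ s * (1 - x) ^ f := by
  have hfact : ((s + f + 1).choose (s + 1) * (s + 1 : ℕ) * s.factorial * f.factorial : ℝ)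
      = (s + f + 1).factorial := by
    have h := Nat.choose_mul_factorial_mul_factorial (show s + 1 ≤ s + f + 1 by omega)
    rw [show s + f + 1 - (s + 1) = f by omega, Nat.factorial_succ s] at h
    exact_mod_cast (by rw [← h]; ring)
  have hGamma : Gamma ((s + 1 : ℕ) + (f + 1 : ℕ)) / (Gamma (s + 1 : ℕ) * Gamma (f + 1 : ℕ))
      = (s + f + 1).choose (s + 1) * (s + 1 : ℕ) := by
    rw [show ((s + 1 : ℕ) + (f + 1 : ℕ) : ℝ) = (s + f + 1 : ℕ) + 1 by push_cast; ring,
      Nat.cast_succ s, Nat.cast_succ f, Gamma_nat_eq_factorial, Gamma_nat_eq_factorial,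
      Gamma_nat_eq_factorial, div_eq_iff (by positivity), ← hfact]
    push_cast
    ring
  ext x
  simp only [_root_.betaPDF, Set.indicator_apply, Set.mem_Ioo, hGamma, Nat.add_sub_cancel]

lemma betaCDF_succ_succ (s f : ℕ) {y : ℝ} (hy : 0 ≤ y) :
    betaCDF (s + 1) (f + 1) y = 1 - ∑ j ∈ range (s + 1), binPMF (s + f + 1) (min y 1) j := by
  have hset : (Set.Ioo (0 : ℝ) 1 ∩ Set.Iic y : Set ℝ) =ᵐ[volume] Set.Ioc 0 (min y 1) := by
    rw [← min_comm, ← Set.Ioc_inter_Iic]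
    exact Ioo_ae_eq_Ioc.inter (Filter.EventuallyEq.refl _ _)
  have hderiv : ∀ x, HasDerivAt (fun x => -∑ j ∈ range (s + 1), binPMF (s + f + 1) x j)
      ((s + f + 1).choose (s + 1) * (s + 1 : ℕ) * x ^ s * (1 - x) ^ f) x := fun x => by
    simpa [show s + f + 1 - (s + 1) = f by omega]
      using (hasDerivAt_sum_range_binPMF (s + f + 1) s x).fun_neg
  have hzero : ∑ j ∈ range (s + 1), binPMF (s + f + 1) 0 j = 1 := by
    rw [sum_eq_single 0 (fun j _ hj => by simp [binPMF, hj]) (by simp)]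
    simp [binPMF]
  rw [betaCDF, betaPDF_succ_succ_s11, integral_indicator measurableSet_Ioo,
    Measure.restrict_restrict measurableSet_Ioo, setIntegral_congr_set hset,
    ← intervalIntegral.integral_of_le (le_min hy zero_le_one),
    intervalIntegral.integral_eq_sub_of_hasDerivAt (fun x _ => hderiv x)
      ((by fun_prop : Continuous _).intervalIntegrable _ _), hzero]
  ring

lemma betaCDF_succ_succ_of_one_le (s f : ℕ) {y : ℝ} (hy : 1 ≤ y) :
    betaCDF (s + 1) (f + 1) y = 1 := by
  rw [betaCDF_succ_succ s f (zero_le_one.trans hy), min_eq_right hy,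
    sum_eq_zero fun j hj => by simp [binPMF, zero_pow (by grind : s + f + 1 - j ≠ 0)], sub_zero]

def tupleCount {α : Type*} [DecidableEq α] {j : ℕ} (h : Fin j → α) (y : α) : ℕ :=
  (univ.filter fun τ => h τ = y).card

lemma card_filter_fst_eq {α : Type*} [DecidableEq α] {j : ℕ} (h : Fin j → α × Bool) (a : α) :
    (univ.filter fun τ => (h τ).1 = a).card
      = tupleCount h (a, true) + tupleCount h (a, false) := by
  rw [tupleCount, tupleCount, ← card_union_of_disjoint (disjoint_filter.2 fun τ _ h1 h2 => by
    simp [h1] at h2), ← filter_or]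
  congr 1
  ext τ
  simp only [mem_filter, mem_univ, true_and]
  generalize h τ = y
  rcases y with ⟨_, _ | _⟩ <;> simp

/-- The likelihood ratio of the exponential tilt by `η` of a Bernoulli(`p`) reward of arm `i`
against the untilted law; for `p = μ i` its conditional mean given the past is `1`. -/
noncomputable def tiltWeight {N : ℕ} (i : Fin N) (p η : ℝ) (y : Fin N × Bool) : ℝ :=
  exp (η * (if y = (i, true) then 1 else 0)
    - log (1 - p + p * exp η) * (if y.1 = i then 1 else 0))

lemma prod_tiltWeight {N j : ℕ} (i : Fin N) (p η : ℝ) (h : Fin j → Fin N × Bool) :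
    ∏ τ, tiltWeight i p η (h τ) = exp (η * tupleCount h (i, true)
      - log (1 - p + p * exp η) * (tupleCount h (i, true) + tupleCount h (i, false) : ℕ)) := by
  simp only [tiltWeight]
  rw [← card_filter_fst_eq, tupleCount, ← exp_sum, sum_sub_distrib, ← mul_sum, ← mul_sum,
    sum_boole, sum_boole]

lemma tiltWeight_mul_add_le {N : ℕ} {μ : Fin N → ℝ} {i : Fin N} (hμ : 0 ≤ μ i) {η : ℝ}
    (hη : 0 ≤ η) (j : Fin N) :
    tiltWeight i (μ i) η (j, true) * μ j + tiltWeight i (μ i) η (j, false) * (1 - μ j) ≤ 1 := by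
  rcases eq_or_ne j i with rfl | hj
  · have hm : 0 < 1 - μ j + μ j * exp η := by nlinarith [one_le_exp hη]
    have htrue : tiltWeight j (μ j) η (j, true) = exp η / (1 - μ j + μ j * exp η) := by
      simp [tiltWeight, exp_sub, exp_log hm]
    have hfalse : tiltWeight j (μ j) η (j, false) = 1 / (1 - μ j + μ j * exp η) := by
      simp [tiltWeight, exp_neg, exp_log hm]
    rw [htrue, hfalse, div_mul_eq_mul_div, div_mul_eq_mul_div, ← add_div, div_le_one hm]
    linarith
  · simp [tiltWeight, hj]

lemma one_le_exp_mul_prod_tiltWeight {N j : ℕ} {i : Fin N} {p ε L : ℝ} (hp0 : 0 ≤ p)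
    (hp1 : p ≤ 1) (hε : 0 ≤ ε) (h : Fin j → Fin N × Bool)
    (hL : L ≤ (tupleCount h (i, true) + tupleCount h (i, false) : ℕ))
    (hS : (p + ε) * (tupleCount h (i, true) + tupleCount h (i, false) : ℕ)
      < tupleCount h (i, true)) :
    1 ≤ exp (-(2 * ε ^ 2 * L)) * ∏ τ, tiltWeight i p (4 * ε) (h τ) := by
  set K : ℝ := ((tupleCount h (i, true) + tupleCount h (i, false) : ℕ) : ℝ)
  have hlog : log (1 - p + p * exp (4 * ε)) ≤ p * (4 * ε) + (4 * ε) ^ 2 / 8 := by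
    rw [log_le_iff_le_exp (by nlinarith [one_le_exp (by positivity : 0 ≤ 4 * ε)])]
    exact one_sub_add_mul_exp_le hp0 hp1 _
  rw [prod_tiltWeight, ← exp_add, one_le_exp_iff]
  nlinarith [mul_le_mul_of_nonneg_right hlog (by positivity : (0 : ℝ) ≤ K)]

namespace TSModel

variable {N : ℕ} {μ : Fin N → ℝ} {Ω : Type*} [MeasurableSpace Ω] {P : Measure Ω}
  (M : TSModel N μ P)

def historyEvent (j : ℕ) (h : Fin j → Fin N × Bool) : Set Ω :=
  {ω | ∀ τ : Fin j, (M.play ((τ : ℕ) + 1) ω, M.r ((τ : ℕ) + 1) ω) = h τ}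

lemma historyEvent_zero (h : Fin 0 → Fin N × Bool) : M.historyEvent 0 h = Set.univ := by
  simp [historyEvent]

lemma historyEvent_snoc (j : ℕ) (g : Fin j → Fin N × Bool) (i : Fin N) (b : Bool) :
    M.historyEvent (j + 1) (Fin.snoc g (i, b))
      = (M.historyEvent j g ∩ {ω | M.play (j + 1) ω = i}) ∩ {ω | M.r (j + 1) ω = b} := by
  ext ω
  simp only [historyEvent, Fin.forall_fin_succ', Fin.snoc_castSucc, Fin.val_castSucc,
    Fin.snoc_last, Fin.val_last, Prod.mk.injEq, Set.mem_ofPred_eq, Set.mem_inter_iff, and_assoc]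

lemma measureReal_historyEvent_snoc [IsFiniteMeasure P] (j : ℕ) (g : Fin j → Fin N × Bool)
    {i : Fin N} (hμ : 0 ≤ μ i) (b : Bool) :
    P.real (M.historyEvent (j + 1) (Fin.snoc g (i, b)))
      = (if b then μ i else 1 - μ i)
        * P.real (M.historyEvent j g ∩ {ω | M.play (j + 1) ω = i}) := by
  set A := M.historyEvent j g ∩ {ω | M.play (j + 1) ω = i}
  have hsucc : P.real (A ∩ {ω | M.r (j + 1) ω = true}) = μ i * P.real A := by
    have h := M.reward (j + 1) i g Set.univ MeasurableSet.univ
    change P ({ω | M.r (j + 1) ω = true} ∩ Set.univ ∩ M.historyEvent j g ∩ _)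
      = _ * P (Set.univ ∩ M.historyEvent j g ∩ _) at h
    rw [Set.inter_univ, Set.univ_inter, Set.inter_assoc, Set.inter_comm] at h
    rw [measureReal_def, measureReal_def, h, ENNReal.toReal_mul, ENNReal.toReal_ofReal hμ]
  rw [historyEvent_snoc]
  cases b
  · have := measureReal_inter_add_sdiff (μ := P) (s := A)
        (show MeasurableSet {ω | M.r (j + 1) ω = true} from M.meas_r _ (measurableSet_singleton _))
    rw [hsucc] at this
    have hfalse : A \ {ω | M.r (j + 1) ω = true} = A ∩ {ω | M.r (j + 1) ω = false} := by
      ext ω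
      simp
    rw [hfalse] at this
    simp only [Bool.false_eq_true, ↓reduceIte]
    linarith
  · simpa using hsucc

lemma sum_measureReal_inter_play [IsFiniteMeasure P] (E : Set Ω) (t : ℕ) :
    ∑ i, P.real (E ∩ {ω | M.play t ω = i}) = P.real E := by
  have := sum_measureReal_preimage_singleton (μ := P.restrict E) univ
    (f := M.play t) fun i _ => M.meas_play t (measurableSet_singleton i)
  simp only [coe_univ, Set.preimage_univ, measureReal_restrict_apply_univ] at this
  rw [← this]
  refine sum_congr rfl fun i _ => ?_
  rw [measureReal_restrict_apply (M.meas_play t (measurableSet_singleton i)), Set.inter_comm]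
  rfl

lemma sum_mul_measureReal_historyEvent_snoc_le [IsFiniteMeasure P] (hμ : ∀ i, 0 ≤ μ i)
    {f : Fin N × Bool → ℝ} (hf : ∀ i, f (i, true) * μ i + f (i, false) * (1 - μ i) ≤ 1) (j : ℕ)
    (g : Fin j → Fin N × Bool) :
    ∑ y, f y * P.real (M.historyEvent (j + 1) (Fin.snoc g y)) ≤ P.real (M.historyEvent j g) := by
  rw [← M.sum_measureReal_inter_play _ (j + 1), Fintype.sum_prod_type]
  refine sum_le_sum fun i _ => ?_
  simp only [Fintype.sum_bool, M.measureReal_historyEvent_snoc j g (hμ i), ↓reduceIte,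
    Bool.false_eq_true]
  have := mul_le_mul_of_nonneg_right (hf i) (measureReal_nonneg (μ := P)
    (s := M.historyEvent j g ∩ {ω | M.play (j + 1) ω = i}))
  linarith

lemma sum_prod_mul_measureReal_historyEvent_le_one [IsProbabilityMeasure P]
    (hμ : ∀ i, 0 ≤ μ i) {f : Fin N × Bool → ℝ} (hf0 : ∀ y, 0 ≤ f y)
    (hf : ∀ i, f (i, true) * μ i + f (i, false) * (1 - μ i) ≤ 1) (j : ℕ) :
    ∑ h : Fin j → Fin N × Bool, (∏ τ, f (h τ)) * P.real (M.historyEvent j h) ≤ 1 := by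
  induction j with
  | zero => simp [historyEvent_zero]
  | succ j ih =>
    calc ∑ h : Fin (j + 1) → Fin N × Bool, (∏ τ, f (h τ)) * P.real (M.historyEvent (j + 1) h)
        = ∑ g : Fin j → Fin N × Bool, (∏ τ, f (g τ)) *
            ∑ y, f y * P.real (M.historyEvent (j + 1) (Fin.snoc g y)) := by
          rw [← (Fin.snocEquiv fun _ => Fin N × Bool).sum_comp, Fintype.sum_prod_type, sum_comm]
          simp only [Fin.snocEquiv_apply, Fin.prod_univ_castSucc, Fin.snoc_castSucc,
            Fin.snoc_last, mul_assoc, mul_sum]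
          rfl
      _ ≤ ∑ g : Fin j → Fin N × Bool, (∏ τ, f (g τ)) * P.real (M.historyEvent j g) := by
          gcongr with g
          · exact prod_nonneg fun τ _ => hf0 _
          · exact M.sum_mul_measureReal_historyEvent_snoc_le hμ hf j g
      _ ≤ 1 := ih

lemma k_eq_of_mem_historyEvent [NeZero N] {t : ℕ} {h : Fin (t - 1) → Fin N × Bool} {ω : Ω}
    (hω : ω ∈ M.historyEvent (t - 1) h) (i : Fin N) :
    M.k i t ω = tupleCount h (i, true) + tupleCount h (i, false) := by
  rw [← card_filter_fst_eq, TSModel.k, card_filter, card_filter, sum_Ico_eq_sum_range,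
    ← Fin.sum_univ_eq_sum_range (fun τ => if M.play (1 + τ) ω = i then 1 else 0)]
  refine sum_congr rfl fun τ _ => ?_
  rw [add_comm, ← congrArg Prod.fst (hω τ)]

lemma measure_theta_le_inter_historyEvent (t : ℕ) (i : Fin N) (c : ℝ)
    (h : Fin (t - 1) → Fin N × Bool) :
    P ({ω | M.θ t i ω ≤ c} ∩ M.historyEvent (t - 1) h)
      = ENNReal.ofReal (betaCDF (tupleCount h (i, true) + 1) (tupleCount h (i, false) + 1) c)
        * P (M.historyEvent (t - 1) h) := by
  set x : ℕ → Fin N → ℝ := fun n => Function.update (fun _ => (n + 1 : ℝ)) i c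
  set A : ℕ → Set Ω := fun n => {ω | ∀ j, M.θ t j ω ≤ x n j} ∩ M.historyEvent (t - 1) h
  -- the thresholds `n + 1 ≥ 1` of the other arms make their Beta factors equal to `1`
  have hA : ∀ n, P (A n) = ENNReal.ofReal
      (betaCDF (tupleCount h (i, true) + 1) (tupleCount h (i, false) + 1) c)
        * P (M.historyEvent (t - 1) h) := fun n => by
    refine (M.beta_sample t h (x n)).trans (congrArg₂ _ (congrArg _ ?_) rfl)
    rw [prod_eq_single i (fun j _ hj => by
      simp only [x, Function.update_of_ne hj]
      exact betaCDF_succ_succ_of_one_le _ _ (by linarith [(n.cast_nonneg : (0 : ℝ) ≤ n)]))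
      (by simp)]
    simp [x, tupleCount]
  have hmono : Monotone A := fun m n hmn ω ⟨hθ, hω⟩ => ⟨fun j => (hθ j).trans (by
    rcases eq_or_ne j i with rfl | hj
    · simp [x]
    · simp [x, Function.update_of_ne hj, hmn]), hω⟩
  have hunion : ⋃ n, A n = {ω | M.θ t i ω ≤ c} ∩ M.historyEvent (t - 1) h := by
    ext ω
    simp only [A, Set.mem_iUnion, Set.mem_inter_iff, Set.mem_ofPred_eq]
    constructor
    · rintro ⟨n, hθ, hω⟩
      exact ⟨by simpa [x] using hθ i, hω⟩
    · rintro ⟨hθ, hω⟩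
      obtain ⟨n, hn⟩ := exists_nat_ge (⨆ j, M.θ t j ω)
      refine ⟨n, fun j => ?_, hω⟩
      rcases eq_or_ne j i with rfl | hj
      · simpa [x] using hθ
      · simp only [x, Function.update_of_ne hj]
        linarith [le_ciSup (Set.finite_range fun j => M.θ t j ω).bddAbove j]
  rw [← hunion, hmono.measure_iUnion, funext hA, ciSup_const]

lemma measureReal_theta_gt_inter_historyEvent [IsFiniteMeasure P] (t : ℕ) (i : Fin N) {c : ℝ}
    (hc0 : 0 ≤ c) (hc1 : c ≤ 1) (h : Fin (t - 1) → Fin N × Bool) :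
    P.real ({ω | c < M.θ t i ω} ∩ M.historyEvent (t - 1) h)
      = (∑ j ∈ range (tupleCount h (i, true) + 1),
          binPMF (tupleCount h (i, true) + tupleCount h (i, false) + 1) c j)
        * P.real (M.historyEvent (t - 1) h) := by
  set s := tupleCount h (i, true)
  set f := tupleCount h (i, false)
  have hβ : 0 ≤ betaCDF (s + 1) (f + 1) c := integral_nonneg fun x => by
    rw [betaPDF_succ_succ_s11]
    exact Set.indicator_nonneg (fun x hx => by
      have := hx.1
      have := sub_pos.2 hx.2
      positivity) x
  have hle := congrArg ENNReal.toReal (M.measure_theta_le_inter_historyEvent t i c h)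
  rw [ENNReal.toReal_mul, ENNReal.toReal_ofReal hβ, betaCDF_succ_succ _ _ hc0,
    min_eq_left hc1] at hle
  have hsplit := measureReal_inter_add_sdiff (μ := P) (s := M.historyEvent (t - 1) h)
    (show MeasurableSet {ω | M.θ t i ω ≤ c} from M.meas_θ t i measurableSet_Iic)
  have hgt : M.historyEvent (t - 1) h \ {ω | M.θ t i ω ≤ c}
      = {ω | c < M.θ t i ω} ∩ M.historyEvent (t - 1) h := by
    ext ω
    simp [and_comm]
  rw [hgt, Set.inter_comm] at hsplit
  simp only [← measureReal_def] at hle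
  linear_combination hsplit - hle

lemma measureReal_theta_gt_inter_historyEvent_le [IsFiniteMeasure P] {t : ℕ} {i : Fin N}
    {ε L : ℝ} (hμ : 0 ≤ μ i) (hε : 0 ≤ ε) (hc : μ i + 2 * ε ≤ 1)
    (h : Fin (t - 1) → Fin N × Bool)
    (hL : L ≤ (tupleCount h (i, true) + tupleCount h (i, false) : ℕ))
    (hS : tupleCount h (i, true)
      ≤ (μ i + ε) * (tupleCount h (i, true) + tupleCount h (i, false) : ℕ)) :
    P.real ({ω | μ i + 2 * ε < M.θ t i ω} ∩ M.historyEvent (t - 1) h)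
      ≤ exp (-(2 * ε ^ 2 * L)) * P.real (M.historyEvent (t - 1) h) := by
  rw [M.measureReal_theta_gt_inter_historyEvent t i (by positivity) hc h]
  gcongr
  calc _ ≤ exp (-(2 * ε ^ 2 * (tupleCount h (i, true) + tupleCount h (i, false) + 1 : ℕ))) := by
        refine sum_range_binPMF_le_exp (by positivity) hc hε ?_
        push_cast at hS ⊢
        nlinarith
    _ ≤ exp (-(2 * ε ^ 2 * L)) := by
        gcongr
        push_cast at hL ⊢
        linarith

lemma measureReal_theta_gt_and_le_k_inter_historyEvent_le [NeZero N] [IsFiniteMeasure P]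
    {t : ℕ} {i : Fin N} {ε L : ℝ} (hμ : 0 ≤ μ i) (hε : 0 ≤ ε) (hc : μ i + 2 * ε ≤ 1)
    (h : Fin (t - 1) → Fin N × Bool) :
    P.real ({ω | μ i + 2 * ε < M.θ t i ω ∧ L ≤ M.k i t ω} ∩ M.historyEvent (t - 1) h)
      ≤ exp (-(2 * ε ^ 2 * L)) * P.real (M.historyEvent (t - 1) h)
        + exp (-(2 * ε ^ 2 * L))
          * ((∏ τ, tiltWeight i (μ i) (4 * ε) (h τ)) * P.real (M.historyEvent (t - 1) h)) := by
  have hW : 0 ≤ ∏ τ, tiltWeight i (μ i) (4 * ε) (h τ) := prod_nonneg fun _ _ => (exp_pos _).le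
  by_cases hL : L ≤ (tupleCount h (i, true) + tupleCount h (i, false) : ℕ)
  · by_cases hS : tupleCount h (i, true)
        ≤ (μ i + ε) * (tupleCount h (i, true) + tupleCount h (i, false) : ℕ)
    · calc _ ≤ P.real ({ω | μ i + 2 * ε < M.θ t i ω} ∩ M.historyEvent (t - 1) h) :=
            measureReal_mono (Set.inter_subset_inter_left _ fun ω hω => hω.1)
        _ ≤ exp (-(2 * ε ^ 2 * L)) * P.real (M.historyEvent (t - 1) h) :=
            M.measureReal_theta_gt_inter_historyEvent_le hμ hε hc h hL hS
        _ ≤ _ := le_add_of_nonneg_right (by positivity)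
    · calc _ ≤ P.real (M.historyEvent (t - 1) h) := measureReal_mono Set.inter_subset_right
        _ ≤ exp (-(2 * ε ^ 2 * L)) * (∏ τ, tiltWeight i (μ i) (4 * ε) (h τ))
              * P.real (M.historyEvent (t - 1) h) :=
            le_mul_of_one_le_left measureReal_nonneg (one_le_exp_mul_prod_tiltWeight hμ
              (by linarith) hε h hL (not_le.1 hS))
        _ ≤ _ := by
            rw [mul_assoc]
            exact le_add_of_nonneg_left (by positivity)
  · have hempty :
        {ω | μ i + 2 * ε < M.θ t i ω ∧ L ≤ M.k i t ω} ∩ M.historyEvent (t - 1) h = ∅ :=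
      Set.eq_empty_of_forall_notMem fun ω ⟨⟨_, hk⟩, hω⟩ => hL (by
        rwa [M.k_eq_of_mem_historyEvent hω] at hk)
    rw [hempty, measureReal_empty]
    positivity

theorem measureReal_theta_gt_and_le_k_le [NeZero N] [IsProbabilityMeasure P]
    (hμ : ∀ j, 0 ≤ μ j) {i : Fin N} {ε : ℝ} (hε : 0 ≤ ε) (hc : μ i + 2 * ε ≤ 1) (L : ℝ) (t : ℕ) :
    P.real {ω | μ i + 2 * ε < M.θ t i ω ∧ L ≤ M.k i t ω} ≤ 2 * exp (-(2 * ε ^ 2 * L)) := by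
  set q := exp (-(2 * ε ^ 2 * L))
  set B := {ω | μ i + 2 * ε < M.θ t i ω ∧ L ≤ M.k i t ω}
  set W := fun h : Fin (t - 1) → Fin N × Bool => ∏ τ, tiltWeight i (μ i) (4 * ε) (h τ)
  have hone : ∑ h, P.real (M.historyEvent (t - 1) h) ≤ 1 := by
    simpa using M.sum_prod_mul_measureReal_historyEvent_le_one hμ (f := fun _ => 1)
      (fun _ => zero_le_one) (fun j => by linarith) (t - 1)
  have htilt := M.sum_prod_mul_measureReal_historyEvent_le_one hμ
    (f := tiltWeight i (μ i) (4 * ε)) (fun _ => (exp_pos _).le)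
    (tiltWeight_mul_add_le (hμ i) (by positivity)) (t - 1)
  calc P.real B ≤ ∑ h, P.real (B ∩ M.historyEvent (t - 1) h) := by
        refine (measureReal_mono fun ω hω => ?_).trans (measureReal_iUnion_fintype_le _)
        exact Set.mem_iUnion.2 ⟨fun τ => (M.play (τ + 1) ω, M.r (τ + 1) ω), hω, fun τ => rfl⟩
    _ ≤ ∑ h, (q * P.real (M.historyEvent (t - 1) h)
          + q * (W h * P.real (M.historyEvent (t - 1) h))) :=
        sum_le_sum fun h _ =>
          M.measureReal_theta_gt_and_le_k_inter_historyEvent_le (hμ i) hε hc h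
    _ = q * ∑ h, P.real (M.historyEvent (t - 1) h)
          + q * ∑ h, W h * P.real (M.historyEvent (t - 1) h) := by
        rw [sum_add_distrib, mul_sum, mul_sum]
    _ ≤ q * 1 + q * 1 := by gcongr
    _ = 2 * q := by ring

end TSModel

open TSModel in
theorem two_arm_E2_bound_general {Ω : Type*} [MeasurableSpace Ω] (P : Measure Ω)
    [IsProbabilityMeasure P] (μ : Fin 2 → ℝ)
    (hμ0 : μ 0 ≤ 1) (hμ1 : 0 ≤ μ 1) (hgap : μ 1 < μ 0)
    (M : TSModel 2 μ P) (T : ℕ) (hT : 1 ≤ T)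
    (Δ L : ℝ) (hΔ : Δ = μ 0 - μ 1) (hL : L = 24 * Real.log T / Δ ^ 2)
    (t : ℕ) :
    (P {ω | M.θ t 1 ω ≤ μ 1 + Δ / 2 ∨ (M.k 1 t ω : ℝ) < L}).toReal ≥
      1 - 2 / (T : ℝ) ^ 2 := by
  have hT1 : (1 : ℝ) ≤ T := by exact_mod_cast hT
  have hΔpos : 0 < Δ := by linarith
  have hbad := M.measureReal_theta_gt_and_le_k_le (Fin.forall_fin_two.2 ⟨by linarith, hμ1⟩)
    (i := 1) (ε := Δ / 4) (by positivity) (by linarith) L t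
  have hq : exp (-(2 * (Δ / 4) ^ 2 * L)) = ((T : ℝ) ^ 3)⁻¹ := by
    rw [hL, show 2 * (Δ / 4) ^ 2 * (24 * log T / Δ ^ 2) = log ((T : ℝ) ^ 3) by
      rw [log_pow]; field_simp; ring, exp_neg, exp_log (by positivity)]
  have hcover : 1 ≤ P.real {ω | M.θ t 1 ω ≤ μ 1 + Δ / 2 ∨ (M.k 1 t ω : ℝ) < L}
      + P.real {ω | μ 1 + 2 * (Δ / 4) < M.θ t 1 ω ∧ L ≤ M.k 1 t ω} := by
    rw [← probReal_univ (μ := P)]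
    refine (measureReal_mono fun ω _ => ?_).trans (measureReal_union_le _ _)
    by_cases h : M.θ t 1 ω ≤ μ 1 + Δ / 2 ∨ (M.k 1 t ω : ℝ) < L
    · exact Or.inl h
    · push Not at h
      exact Or.inr ⟨by linarith [h.1], h.2⟩
  have hT3 : ((T : ℝ) ^ 3)⁻¹ ≤ ((T : ℝ) ^ 2)⁻¹ :=
    inv_anti₀ (by positivity) (pow_le_pow_right₀ hT1 (by norm_num))
  rw [hq] at hbad
  rw [ge_iff_le, ← measureReal_def, div_eq_mul_inv]
  linarith

open TSModel in
/-- two-armed Bernoulli Thompson Sampling with `μ₀ > μ₁` (arm `0`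
optimal), `Δ = μ₀ − μ₁`, horizon `T`, `L = 24 (ln T)/Δ²`.  For every time step `t`,
the event `E₂(t) = {θ₁(t) ≤ μ₁ + Δ/2 or k₁(t) < L}` has `Pr(E₂(t)) ≥ 1 − 2/T²`. -/
theorem two_arm_E2_bound {Ω : Type*} [MeasurableSpace Ω] (P : Measure Ω)
    [IsProbabilityMeasure P] (μ : Fin 2 → ℝ)
    (hμ0 : μ 0 ≤ 1) (hμ1 : 0 ≤ μ 1) (hgap : μ 1 < μ 0)
    (M : TSModel 2 μ P) (T : ℕ) (hT : 1 ≤ T)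
    (Δ L : ℝ) (hΔ : Δ = μ 0 - μ 1) (hL : L = 24 * Real.log T / Δ ^ 2)
    (t : ℕ) (ht : 1 ≤ t) (ht' : t ≤ T) :
    (P {ω | M.θ t 1 ω ≤ μ 1 + Δ / 2 ∨ (M.k 1 t ω : ℝ) < L}).toReal ≥
      1 - 2 / (T : ℝ) ^ 2 :=
  two_arm_E2_bound_general P μ hμ0 hμ1 hgap M T hT Δ L hΔ hL t
end
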